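/- Multisorted Piggyback Duality Theorem: Let A = ISP(M) where M is a finite set of finite D-based algebras of common type. For each M in M let Ω_M be a (possibly empty) subset of D(U(M), 2), and let the alter ego ~M be the multisorted topological structure on the disjoint union of the underlying sets of the members of M, with the discrete topology, with set of relations R equal to the union, over ω_1 in Ω_{M_1} and ω_2 in Ω_{M_2} (M_1, M_2 in M), of the sets R_{ω_1,ω_2}, and with set of operations G equal to the union of all hom-sets A(M_1, M_2) for M_1, M_2 in M. If the separation condition (Sep)_{M,Ω} holds, then ~M yields a multisorted duality on A; that is, for every algebra A in A the multisorted evaluation map e_A : A → ED(A), given by e_A(a)(M)(x) = x(a), is an isomorphism. -/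

import Mathlib

/-!
The evaluation map lands in `E(D(A))` for trivial reasons, and it is injective because `A`
embeds in a product of members of `M`. For surjectivity let `α ∈ E(D(A))`. The functionals
`ω ∘ x` (`ω ∈ Ω_M`, `x ∈ A(A, M)`) are `D`-morphisms `A → 2`; let `C` consist of those with
`ω (α x) = 1` and `D` of those with `ω (α x) = 0`. Both are compact, being continuous images
of closed subsets of the compact hom-spaces, and no member of `C` lies below a member of `D`:
if `ω₁ ∘ x ≤ ω₂ ∘ y`, the pairs `(x a, y a)` span a subalgebra of `(ω₁,ω₂)^{-1}(≤)`, hence lie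
in a relation from `R_{ω₁,ω₂}`, which `α` preserves. Compactness and finite joins and meets in
`A` then give one `a ∈ A` with `ω (x a) = ω (α x)` for all such `ω` and `x`, and since `α`
commutes with the operations `A(M₁, M₂)`, `(Sep)` upgrades this to `x a = α x`.
-/

open FirstOrder FirstOrder.Language FirstOrder.Language.Structure

namespace CoproductsPaper

variable {L : FirstOrder.Language.{0,0}}

/-- Pointwise structure on a product of `L`-structures. -/
instance piStructure {ι : Type} (M : ι → Type) [∀ i, L.Structure (M i)] :
    L.Structure (∀ i, M i) where
  funMap f x i := funMap f fun j => x j i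
  RelMap r x := ∀ i, RelMap r fun j => x j i

/-- Pointwise structure on a binary product of `L`-structures. -/
instance prodStructure {M N : Type} [L.Structure M] [L.Structure N] :
    L.Structure (M × N) where
  funMap f x := (funMap f fun j => (x j).1, funMap f fun j => (x j).2)
  RelMap r x := RelMap r (fun j => (x j).1) ∧ RelMap r fun j => (x j).2

/-- A choice of bounded-lattice symbols in the language `L`. -/
structure DSig (L : FirstOrder.Language.{0,0}) where
  meet : L.Functions 2
  join : L.Functions 2
  bot : L.Functions 0
  top : L.Functions 0

variable (s : DSig L)

/-- The induced meet operation. -/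
def dmeet {X : Type} [L.Structure X] (a b : X) : X := funMap s.meet ![a, b]
/-- The induced join operation. -/
def djoin {X : Type} [L.Structure X] (a b : X) : X := funMap s.join ![a, b]
/-- The induced bottom element. -/
def dbot (X : Type) [L.Structure X] : X := funMap s.bot ![]
/-- The induced top element. -/
def dtop (X : Type) [L.Structure X] : X := funMap s.top ![]

/-- The induced operations make `X` a bounded distributive lattice:
this is the property of having a `D`-reduct. -/
structure IsDAlg (X : Type) [L.Structure X] : Prop where
  meet_comm : ∀ a b : X, dmeet s a b = dmeet s b a
  join_comm : ∀ a b : X, djoin s a b = djoin s b a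
  meet_assoc : ∀ a b c : X, dmeet s (dmeet s a b) c = dmeet s a (dmeet s b c)
  join_assoc : ∀ a b c : X, djoin s (djoin s a b) c = djoin s a (djoin s b c)
  absorb_meet : ∀ a b : X, dmeet s a (djoin s a b) = a
  absorb_join : ∀ a b : X, djoin s a (dmeet s a b) = a
  meet_distrib : ∀ a b c : X, dmeet s a (djoin s b c) = djoin s (dmeet s a b) (dmeet s a c)
  bot_join : ∀ a : X, djoin s (dbot s X) a = a
  top_meet : ∀ a : X, dmeet s (dtop s X) a = a

/-- A `D`-morphism from the `D`-reduct of `X` to the two-element lattice `2 = Bool`. -/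
def IsBoolDHom {X : Type} [L.Structure X] (ω : X → Bool) : Prop :=
  (∀ a b : X, ω (dmeet s a b) = (ω a && ω b)) ∧
  (∀ a b : X, ω (djoin s a b) = (ω a || ω b)) ∧
  ω (dbot s X) = false ∧ ω (dtop s X) = true

/-- A class of `L`-structures. -/
abbrev ClassOf (L : FirstOrder.Language.{0,0}) : Type 1 := (X : Type) → L.Structure X → Prop

/-- Membership in `ISP M` for a (multi-generator) family `M`:
isomorphic copies of subalgebras of products of the `M i`, i.e. structures embeddable
into a product of members of the family. -/
def ISPc {ι : Type} (Mf : ι → Type) [∀ i, L.Structure (Mf i)] : ClassOf L :=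
  fun X iX => ∃ (κ : Type) (g : κ → ι),
    Nonempty (@FirstOrder.Language.Embedding L X (∀ k, Mf (g k)) iX inferInstance)

/-- Membership in `ISP M` for a single generator. -/
def ISPc1 (M : Type) [L.Structure M] : ClassOf L :=
  fun X iX => ∃ κ : Type,
    Nonempty (@FirstOrder.Language.Embedding L X (κ → M) iX inferInstance)

/-- The separation condition `(Sep)_{M,Ω}`. -/
def SepCond {ι : Type} (Mf : ι → Type) [∀ i, L.Structure (Mf i)]
    (Ω : ∀ i, Set (Mf i → Bool)) : Prop :=
  ∀ (i : ι) (a b : Mf i), a ≠ b →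
    ∃ (j : ι) (u : Mf i →[L] Mf j) (ω : Mf j → Bool), ω ∈ Ω j ∧ ω (u a) ≠ ω (u b)

/-- The separation condition `(Sep)_{M,ω}` for a single algebra and single carrier map. -/
def SepCond1 (M : Type) [L.Structure M] (ω : M → Bool) : Prop :=
  ∀ a b : M, a ≠ b → ∃ u : M →[L] M, ω (u a) ≠ ω (u b)

/-- The bounded sublattice `(ω₁,ω₂)^{-1}(≤)` of `M × N`. -/
def piggySet {M N : Type} (ω₁ : M → Bool) (ω₂ : N → Bool) : Set (M × N) :=
  {p | ω₁ p.1 ≤ ω₂ p.2}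

/-- `R_{ω₁,ω₂}`: the set of subalgebras of `M × N` that are maximal with respect to
being contained in `(ω₁,ω₂)^{-1}(≤)`. -/
def RSet {M N : Type} [L.Structure M] [L.Structure N]
    (ω₁ : M → Bool) (ω₂ : N → Bool) : Set (L.Substructure (M × N)) :=
  {r : L.Substructure (M × N) | (r : Set (M × N)) ⊆ piggySet ω₁ ω₂ ∧
    ∀ r' : L.Substructure (M × N), (r' : Set (M × N)) ⊆ piggySet ω₁ ω₂ → r ≤ r' → r' = r}

/-- `(C, ε)` is a coproduct co-cone for the family `K` within the class `Acl`. -/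
def IsCoprod (Acl : ClassOf L) {κ : Type} (K : κ → Type) [iK : ∀ k, L.Structure (K k)]
    (C : Type) [iC : L.Structure C] (ε : ∀ k, K k →[L] C) : Prop :=
  Acl C iC ∧ ∀ (B : Type) [iB : L.Structure B], Acl B iB →
    ∀ f : ∀ k, K k →[L] B, ∃! h : C →[L] B, ∀ k, h.comp (ε k) = f k

/-- `F` is free over the class `Acl` on the generators `gen : G → F`. -/
def IsFreeOver (Acl : ClassOf L) (G : Type) (F : Type) [iF : L.Structure F]
    (gen : G → F) : Prop :=
  Acl F iF ∧ ∀ (B : Type) [iB : L.Structure B], Acl B iB →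
    ∀ v : G → B, ∃! h : F →[L] B, ∀ x : G, h (gen x) = v x

/-- A bounded-lattice homomorphism between bounded lattices (unbundled). -/
def IsBLHom {P Q : Type} [Lattice P] [BoundedOrder P] [Lattice Q] [BoundedOrder Q]
    (h : P → Q) : Prop :=
  (∀ a b : P, h (a ⊓ b) = h a ⊓ h b) ∧ (∀ a b : P, h (a ⊔ b) = h a ⊔ h b) ∧
    h ⊥ = ⊥ ∧ h ⊤ = ⊤

/-- A `D`-morphism from the `D`-reduct of the `L`-structure `X` to a bounded lattice `Q`. -/
def IsRedHom {X Q : Type} [L.Structure X] [Lattice Q] [BoundedOrder Q] (f : X → Q) : Prop :=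
  (∀ a b : X, f (dmeet s a b) = f a ⊓ f b) ∧ (∀ a b : X, f (djoin s a b) = f a ⊔ f b) ∧
    f (dbot s X) = ⊥ ∧ f (dtop s X) = ⊤

/-- A `D`-morphism from a bounded lattice `P` to the `D`-reduct of the `L`-structure `X`. -/
def IsCoRedHom {P X : Type} [Lattice P] [BoundedOrder P] [L.Structure X] (f : P → X) : Prop :=
  (∀ a b : P, f (a ⊓ b) = dmeet s (f a) (f b)) ∧ (∀ a b : P, f (a ⊔ b) = djoin s (f a) (f b)) ∧
    f ⊥ = dbot s X ∧ f ⊤ = dtop s X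

/-- `(P, η)` is the coproduct in `D` of the `D`-reducts of the family `K`. -/
def IsDCoprodOfReducts {κ : Type} (K : κ → Type) [∀ k, L.Structure (K k)]
    (P : Type) [DistribLattice P] [BoundedOrder P] (η : ∀ k, K k → P) : Prop :=
  (∀ k, IsRedHom s (η k)) ∧
  ∀ (Q : Type) [DistribLattice Q] [BoundedOrder Q] (g : ∀ k, K k → Q),
    (∀ k, IsRedHom s (g k)) →
      ∃! h : {h : P → Q // IsBLHom h}, ∀ k, (h : P → Q) ∘ η k = g k

/-- The discrete product topology on a function space. -/
def powTop (A M : Type) : TopologicalSpace (A → M) :=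
  @Pi.topologicalSpace A (fun _ => M) (fun _ => ⊥)

/-- The natural topology on the hom-set `A(A, M)`, inherited from `M^A` with `M` discrete. -/
def homTop (A M : Type) [L.Structure A] [L.Structure M] : TopologicalSpace (A →[L] M) :=
  (powTop A M).induced (fun h => (h : A → M))

/-- The topology on `HU(A) = D(U(A), 2)`, inherited from `2^A`. -/
def huTop (X : Type) [L.Structure X] : TopologicalSpace {f : X → Bool // IsBoolDHom s f} :=
  (powTop X Bool).induced Subtype.val

section BoolHoms

variable {s} {X Y : Type} [L.Structure X] [L.Structure Y]

theorem IsBoolDHom.comp {ω : Y → Bool} (hω : IsBoolDHom s ω) (h : X →[L] Y) :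
    IsBoolDHom s (ω ∘ h) := by
  have hvec : ∀ a b : X, h ∘ ![a, b] = ![h a, h b] := fun a b => by
    ext i; fin_cases i <;> rfl
  have hnil : h ∘ (![] : Fin 0 → X) = ![] := funext fun i => i.elim0
  refine ⟨fun a b => ?_, fun a b => ?_, ?_, ?_⟩ <;>
    simp only [Function.comp_apply, dmeet, djoin, dbot, dtop, h.map_fun, hvec, hnil]
  exacts [hω.1 _ _, hω.2.1 _ _, hω.2.2.1, hω.2.2.2]

theorem exists_isBoolDHom_eq_true_iff_exists (t : Finset X) :
    ∃ b : X, ∀ φ, IsBoolDHom s φ → (φ b = true ↔ ∃ a ∈ t, φ a = true) := by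
  classical
  induction t using Finset.induction_on with
  | empty => exact ⟨dbot s X, fun φ hφ => by simp [hφ.2.2.1]⟩
  | insert a t _ ih =>
    obtain ⟨b, hb⟩ := ih
    exact ⟨djoin s a b, fun φ hφ => by simp [hφ.2.1, hb φ hφ]⟩

theorem exists_isBoolDHom_eq_true_iff_forall (t : Finset X) :
    ∃ b : X, ∀ φ, IsBoolDHom s φ → (φ b = true ↔ ∀ a ∈ t, φ a = true) := by
  classical
  induction t using Finset.induction_on with
  | empty => exact ⟨dtop s X, fun φ hφ => by simp [hφ.2.2.2]⟩
  | insert a t _ ih =>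
    obtain ⟨b, hb⟩ := ih
    exact ⟨dmeet s a b, fun φ hφ => by simp [hφ.1, hb φ hφ]⟩

end BoolHoms

section Separation

variable {s} {X : Type} [L.Structure X]

theorem exists_forall_true_of_isCompact {K P : Set (X → Bool)} (hK : IsCompact K)
    (hKhom : ∀ φ ∈ K, IsBoolDHom s φ) (hPhom : ∀ ψ ∈ P, IsBoolDHom s ψ)
    (hcover : ∀ φ ∈ K, ∃ a, φ a = true ∧ ∀ ψ ∈ P, ψ a = false) :
    ∃ a, (∀ φ ∈ K, φ a = true) ∧ ∀ ψ ∈ P, ψ a = false := by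
  obtain ⟨t, htS, ht, hKt⟩ := hK.elim_finite_subcover_image
    (b := {a | ∀ ψ ∈ P, ψ a = false}) (c := fun a => {χ : X → Bool | χ a = true})
    (fun a _ =>
      (isOpen_discrete {true}).preimage (continuous_apply (A := fun _ : X => Bool) a))
    (fun φ hφ => by
      obtain ⟨a, hφa, haP⟩ := hcover φ hφ
      exact Set.mem_biUnion haP hφa)
  obtain ⟨b, hb⟩ := exists_isBoolDHom_eq_true_iff_exists (s := s) ht.toFinset
  refine ⟨b, fun φ hφ => (hb φ (hKhom φ hφ)).2 ?_, fun ψ hψ => ?_⟩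
  · obtain ⟨a, hat, hφa⟩ := Set.mem_iUnion₂.1 (hKt hφ)
    exact ⟨a, ht.mem_toFinset.2 hat, hφa⟩
  · rw [← Bool.not_eq_true, hb ψ (hPhom ψ hψ)]
    rintro ⟨a, hat, hψa⟩
    simp [htS (ht.mem_toFinset.1 hat) ψ hψ] at hψa

theorem exists_forall_false_of_isCompact {K P : Set (X → Bool)} (hK : IsCompact K)
    (hKhom : ∀ ψ ∈ K, IsBoolDHom s ψ) (hPhom : ∀ φ ∈ P, IsBoolDHom s φ)
    (hcover : ∀ ψ ∈ K, ∃ a, ψ a = false ∧ ∀ φ ∈ P, φ a = true) :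
    ∃ a, (∀ ψ ∈ K, ψ a = false) ∧ ∀ φ ∈ P, φ a = true := by
  obtain ⟨t, htS, ht, hKt⟩ := hK.elim_finite_subcover_image
    (b := {a | ∀ φ ∈ P, φ a = true}) (c := fun a => {χ : X → Bool | χ a = false})
    (fun a _ =>
      (isOpen_discrete {false}).preimage (continuous_apply (A := fun _ : X => Bool) a))
    (fun ψ hψ => by
      obtain ⟨a, hψa, haP⟩ := hcover ψ hψ
      exact Set.mem_biUnion haP hψa)
  obtain ⟨b, hb⟩ := exists_isBoolDHom_eq_true_iff_forall (s := s) ht.toFinset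
  refine ⟨b, fun ψ hψ => ?_, fun φ hφ => (hb φ (hPhom φ hφ)).2 ?_⟩
  · rw [← Bool.not_eq_true, hb ψ (hKhom ψ hψ)]
    obtain ⟨a, hat, hψa⟩ := Set.mem_iUnion₂.1 (hKt hψ)
    exact fun h => by simp [h a (ht.mem_toFinset.2 hat)] at hψa
  · exact fun a hat => htS (ht.mem_toFinset.1 hat) φ hφ

theorem exists_separating_of_isCompact {C D : Set (X → Bool)} (hC : IsCompact C)
    (hD : IsCompact D) (hChom : ∀ φ ∈ C, IsBoolDHom s φ) (hDhom : ∀ ψ ∈ D, IsBoolDHom s ψ)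
    (hsep : ∀ φ ∈ C, ∀ ψ ∈ D, ∃ a, φ a = true ∧ ψ a = false) :
    ∃ a, (∀ φ ∈ C, φ a = true) ∧ ∀ ψ ∈ D, ψ a = false := by
  obtain ⟨a, hD, hC⟩ := exists_forall_false_of_isCompact hD hDhom hChom fun ψ hψ => by
    obtain ⟨a, hC, hψ⟩ := exists_forall_true_of_isCompact (P := {ψ}) hC hChom
      (by simpa using hDhom ψ hψ) fun φ hφ => by simpa using hsep φ hφ ψ hψ
    exact ⟨a, by simpa using hψ, hC⟩
  exact ⟨a, hC, hD⟩

end Separation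

section HomSpace

variable {A M : Type} [L.Structure A] [L.Structure M]

theorem isClosed_range_coe_hom [TopologicalSpace M] [DiscreteTopology M] :
    IsClosed (Set.range ((⇑) : (A →[L] M) → A → M)) := by
  have hrange : Set.range ((⇑) : (A →[L] M) → A → M) =
      (⋂ (n : ℕ) (F : L.Functions n) (v : Fin n → A),
        {f | f (funMap F v) = funMap F (f ∘ v)}) ∩
      ⋂ (n : ℕ) (r : L.Relations n) (v : Fin n → A) (_ : RelMap r v),
        {f | RelMap r (f ∘ v)} := by
    ext f
    simp only [Set.mem_range, Set.mem_inter_iff, Set.mem_iInter, Set.mem_ofPred_eq]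
    constructor
    · rintro ⟨x, rfl⟩
      exact ⟨fun _ F v => x.map_fun F v, fun _ r v hv => x.map_rel r v hv⟩
    · rintro ⟨hfun, hrel⟩
      exact ⟨⟨f, fun F v => hfun _ F v, fun r v hv => hrel _ r v hv⟩, rfl⟩
  have hcomp : ∀ {n} (v : Fin n → A), Continuous fun f : A → M => f ∘ v := fun v =>
    continuous_pi fun k => continuous_apply (v k)
  rw [hrange]
  refine .inter (isClosed_iInter fun n => isClosed_iInter fun F => isClosed_iInter fun v => ?_)
    (isClosed_iInter fun n => isClosed_iInter fun r => isClosed_iInter fun v =>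
      isClosed_iInter fun _ => (isClosed_discrete _).preimage (hcomp v))
  exact isClosed_eq (continuous_apply _) (continuous_of_discreteTopology.comp (hcomp v))

theorem compactSpace_homTop [Finite M] : @CompactSpace _ (homTop (L := L) A M) := by
  let _ : TopologicalSpace M := ⊥
  have : DiscreteTopology M := ⟨rfl⟩
  let _ := homTop (L := L) A M
  have hind : Topology.IsInducing ((⇑) : (A →[L] M) → A → M) := ⟨rfl⟩
  refine ⟨?_⟩
  rw [hind.isCompact_iff, Set.image_univ]
  exact isClosed_range_coe_hom.isCompact

theorem isCompact_image_comp_setOf [Finite M] {α : (A →[L] M) → M}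
    (hα : @Continuous _ _ (homTop (L := L) A M) ⊥ α) (ω : M → Bool) (b : Bool) :
    IsCompact ((fun x : A →[L] M => ω ∘ x) '' {x | ω (α x) = b}) := by
  let _ : TopologicalSpace M := ⊥
  have : DiscreteTopology M := ⟨rfl⟩
  let _ := homTop (L := L) A M
  have := compactSpace_homTop (L := L) (A := A) (M := M)
  have hcoe : Continuous ((⇑) : (A →[L] M) → A → M) := continuous_induced_dom
  refine IsCompact.image ?_ (continuous_pi fun a =>
    continuous_of_discreteTopology.comp ((continuous_apply a).comp hcoe))
  exact ((isClosed_discrete {b}).preimage (continuous_of_discreteTopology.comp hα)).isCompact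

end HomSpace

def piEvalHom {κ : Type} (P : κ → Type) [∀ k, L.Structure (P k)] (k : κ) :
    (∀ k, P k) →[L] P k where
  toFun f := f k
  map_fun' _ _ := rfl
  map_rel' _ _ h := h k

section Piggyback

variable {A M N : Type} [L.Structure A] [L.Structure M] [L.Structure N]

def pairHom (x : A →[L] M) (y : A →[L] N) : A →[L] M × N where
  toFun a := (x a, y a)
  map_fun' F v := Prod.ext (x.map_fun F v) (y.map_fun F v)
  map_rel' r v h := ⟨x.map_rel r v h, y.map_rel r v h⟩

theorem exists_mem_RSet_le {ω₁ : M → Bool} {ω₂ : N → Bool} (r : L.Substructure (M × N))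
    (hr : (r : Set (M × N)) ⊆ piggySet ω₁ ω₂) : ∃ m ∈ RSet (L := L) ω₁ ω₂, r ≤ m := by
  obtain ⟨m, hrm, hmax⟩ := zorn_le_nonempty₀
    {r : L.Substructure (M × N) | (r : Set (M × N)) ⊆ piggySet ω₁ ω₂}
    (fun c hc hchain r hr => by
      refine ⟨sSup c, fun p hp => ?_, fun _ => le_sSup⟩
      obtain ⟨r', hr'c, hpr'⟩ :=
        (Substructure.mem_sSup_of_directedOn ⟨r, hr⟩ hchain.directedOn).1 hp
      exact hc hr'c hpr') r hr
  exact ⟨m, ⟨hmax.prop, fun r' hr' hmr' => le_antisymm (hmax.2 hr' hmr') hmr'⟩, hrm⟩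

theorem exists_mem_RSet_forall_mem {ω₁ : M → Bool} {ω₂ : N → Bool} (x : A →[L] M)
    (y : A →[L] N) (hxy : ∀ a, ω₁ (x a) ≤ ω₂ (y a)) :
    ∃ m ∈ RSet (L := L) ω₁ ω₂, ∀ a, (x a, y a) ∈ m := by
  obtain ⟨m, hm, hrange⟩ := exists_mem_RSet_le (pairHom x y).range (by
    rintro _ ⟨a, rfl⟩
    exact hxy a)
  exact ⟨m, hm, fun a => hrange ⟨a, rfl⟩⟩

end Piggyback

section Statement0

variable (s : DSig L) {ι : Type} (Mf : ι → Type) [∀ i, L.Structure (Mf i)]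
  (Ω : ∀ i, Set (Mf i → Bool)) (A : Type) [L.Structure A]

/-- The multisorted evaluation map `e_A`, viewed as a map into the full product
`∏_{M ∈ M} M^{A(A,M)}`: `e_A(a)(M)(x) = x(a)`. -/
def evalMap : A → ∀ i : ι, (A →[L] Mf i) → Mf i := fun a _ x => x a

/-- The underlying set of `E(D(A))`:  sort-preserving maps from the multisorted dual
`D(A)` to the alter ego, i.e. those elements `α` of `∏_{M ∈ M} M^{A(A,M)}` which
preserve every relation in `R = ⋃ R_{ω₁,ω₂}` (lifted pointwise), commute with every
homomorphism between members of `M` (acting by composition), and are continuous on each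
sort (hom-sets carrying the topology inherited from `M^A`, `M` discrete). -/
def dualMembers : Set (∀ i : ι, (A →[L] Mf i) → Mf i) :=
  {α |
    (∀ (i j : ι) (ω₁ : Mf i → Bool) (ω₂ : Mf j → Bool), ω₁ ∈ Ω i → ω₂ ∈ Ω j →
      ∀ r ∈ RSet (L := L) ω₁ ω₂, ∀ (x : A →[L] Mf i) (y : A →[L] Mf j),
        (∀ a : A, (x a, y a) ∈ r) → (α i x, α j y) ∈ r) ∧
    (∀ (i j : ι) (g : Mf i →[L] Mf j) (x : A →[L] Mf i), α j (g.comp x) = g (α i x)) ∧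
    (∀ i : ι, @Continuous _ _ (homTop (L := L) A (Mf i)) ⊥ (α i))}

variable {s Mf Ω A}

theorem evalMap_mem_dualMembers (a : A) : evalMap (L := L) Mf A a ∈ dualMembers Mf Ω A := by
  refine ⟨fun i j ω₁ ω₂ _ _ r _ x y hxy => hxy a, fun i j g x => rfl, fun i => ?_⟩
  let _ := homTop (L := L) A (Mf i)
  let _ : TopologicalSpace (Mf i) := ⊥
  exact (continuous_apply (A := fun _ : A => Mf i) a).comp continuous_induced_dom

theorem evalMap_injective (hA : ISPc (L := L) Mf A ‹_›) :
    Function.Injective (evalMap (L := L) Mf A) := by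
  intro a b hab
  obtain ⟨κ, g, ⟨emb⟩⟩ := hA
  exact emb.injective <| funext fun k =>
    congrFun (congrFun hab (g k)) ((piEvalHom (fun k => Mf (g k)) k).comp emb.toHom)

theorem le_of_mem_dualMembers {α : ∀ i, (A →[L] Mf i) → Mf i} (hα : α ∈ dualMembers Mf Ω A)
    {i j : ι} {ω₁ : Mf i → Bool} {ω₂ : Mf j → Bool} (hω₁ : ω₁ ∈ Ω i) (hω₂ : ω₂ ∈ Ω j)
    (x : A →[L] Mf i) (y : A →[L] Mf j) (hxy : ∀ a, ω₁ (x a) ≤ ω₂ (y a)) :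
    ω₁ (α i x) ≤ ω₂ (α j y) := by
  obtain ⟨m, hm, hxym⟩ := exists_mem_RSet_forall_mem x y hxy
  exact hm.1 (hα.1 i j ω₁ ω₂ hω₁ hω₂ m hm x y hxym)

def levelFunctionals (Ω : ∀ i, Set (Mf i → Bool)) (α : ∀ i, (A →[L] Mf i) → Mf i)
    (b : Bool) : Set (A → Bool) :=
  ⋃ i, ⋃ ω ∈ Ω i, (fun x : A →[L] Mf i => ω ∘ x) '' {x | ω (α i x) = b}

theorem mem_levelFunctionals {α : ∀ i, (A →[L] Mf i) → Mf i} {b : Bool} {φ : A → Bool} :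
    φ ∈ levelFunctionals Ω α b ↔ ∃ i, ∃ ω ∈ Ω i, ∃ x, ω (α i x) = b ∧ ω ∘ x = φ := by
  simp [levelFunctionals]

theorem exists_forall_eq_of_mem_dualMembers [Finite ι] [∀ i, Finite (Mf i)]
    (hΩ : ∀ i, ∀ ω ∈ Ω i, IsBoolDHom s ω) {α : ∀ i, (A →[L] Mf i) → Mf i}
    (hα : α ∈ dualMembers Mf Ω A) :
    ∃ a, ∀ i, ∀ ω ∈ Ω i, ∀ x, ω (x a) = ω (α i x) := by
  have hhom : ∀ b, ∀ φ ∈ levelFunctionals Ω α b, IsBoolDHom s φ := by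
    intro b φ hφ
    obtain ⟨i, ω, hω, x, -, rfl⟩ := mem_levelFunctionals.1 hφ
    exact (hΩ i ω hω).comp x
  have hcompact : ∀ b, IsCompact (levelFunctionals Ω α b) := fun b =>
    isCompact_iUnion fun i => (Set.toFinite _).isCompact_biUnion fun ω _ =>
      isCompact_image_comp_setOf (hα.2.2 i) ω b
  obtain ⟨a, htrue, hfalse⟩ := exists_separating_of_isCompact (hcompact true)
    (hcompact false) (hhom true) (hhom false) fun φ hφ ψ hψ => by
      obtain ⟨i, ω₁, hω₁, x, hx, rfl⟩ := mem_levelFunctionals.1 hφ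
      obtain ⟨j, ω₂, hω₂, y, hy, rfl⟩ := mem_levelFunctionals.1 hψ
      by_contra! hle
      have := le_of_mem_dualMembers hα hω₁ hω₂ x y fun a =>
        Bool.le_iff_imp.2 fun h => by simpa using hle a h
      rw [hx, hy] at this
      exact absurd this (by decide)
  refine ⟨a, fun i ω hω x => ?_⟩
  cases hb : ω (α i x)
  · exact hfalse _ (mem_levelFunctionals.2 ⟨i, ω, hω, x, hb, rfl⟩)
  · exact htrue _ (mem_levelFunctionals.2 ⟨i, ω, hω, x, hb, rfl⟩)

theorem multisorted_piggyback_duality_general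
    (L : FirstOrder.Language.{0,0}) (s : DSig L)
    (ι : Type) [Fintype ι] (Mf : ι → Type) [∀ i, L.Structure (Mf i)] [∀ i, Fintype (Mf i)]
    (Ω : ∀ i, Set (Mf i → Bool)) (hΩ : ∀ i, ∀ ω ∈ Ω i, IsBoolDHom s ω)
    (hsep : SepCond (L := L) Mf Ω)
    (A : Type) [iA : L.Structure A] (hA : ISPc (L := L) Mf A iA) :
    (∀ a : A, evalMap (L := L) Mf A a ∈ dualMembers (L := L) Mf Ω A) ∧
    Function.Injective (evalMap (L := L) Mf A) ∧
    (∀ α ∈ dualMembers (L := L) Mf Ω A, ∃ a : A, evalMap (L := L) Mf A a = α) := by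
  refine ⟨evalMap_mem_dualMembers, evalMap_injective hA, fun α hα => ?_⟩
  obtain ⟨a, hagree⟩ := exists_forall_eq_of_mem_dualMembers hΩ hα
  refine ⟨a, funext fun i => funext fun x => by_contra fun hne => ?_⟩
  obtain ⟨j, u, ω, hω, hωu⟩ := hsep i (x a) (α i x) hne
  exact hωu <| by rw [← hα.2.1 i j u x]; exact hagree j ω hω (u.comp x)

/-- Multisorted Piggyback Duality Theorem, for `D`-based algebras.
Let `A = ISP(M)` where `M` is a finite set of finite `D`-based algebras of common type,
let `Ω_M ⊆ D(U(M), 2)` for each `M ∈ M`, and let the alter ego carry the discrete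
topology, the relations `R = ⋃ R_{ω₁,ω₂}` and the operations
`G = ⋃ A(M₁,M₂)`.  If `(Sep)_{M,Ω}` holds, then the alter ego yields a multisorted
duality on `A`: for every `A ∈ A` the multisorted evaluation map
`e_A : A → ED(A)`, `e_A(a)(M)(x) = x(a)`, is an isomorphism, i.e. it is a bijection
from `A` onto `E(D(A))`. -/
theorem multisorted_piggyback_duality
    (L : FirstOrder.Language.{0,0}) (s : DSig L)
    (ι : Type) [Fintype ι] (Mf : ι → Type) [∀ i, L.Structure (Mf i)] [∀ i, Fintype (Mf i)]
    (hDbased : ∀ i, IsDAlg s (Mf i))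
    (Ω : ∀ i, Set (Mf i → Bool)) (hΩ : ∀ i, ∀ ω ∈ Ω i, IsBoolDHom s ω)
    (hsep : SepCond (L := L) Mf Ω)
    (A : Type) [iA : L.Structure A] (hA : ISPc (L := L) Mf A iA) :
    (∀ a : A, evalMap (L := L) Mf A a ∈ dualMembers (L := L) Mf Ω A) ∧
    Function.Injective (evalMap (L := L) Mf A) ∧
    (∀ α ∈ dualMembers (L := L) Mf Ω A, ∃ a : A, evalMap (L := L) Mf A a = α) :=
  multisorted_piggyback_duality_general L s ι Mf Ω hΩ hsep A (iA := iA) hA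

end Statement0

end CoproductsPaper
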